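/- Let w = (w⁺; w⁻; v) ∈ R^{3n} with ‖w‖² = 2n, ‖w‖₀ ≤ 2(1+ξ²)n, and ‖X̃w‖² ≤ (1+ε²)n, where ε² < 1/6. Define I = {i : wᵢ⁺ ≠ 0 and wᵢ⁻ ≠ 0} and J = {j : w_j⁺ = 0 and w_j⁻ = 0}. Then |I| + |J| < 38ξ²n. -/

import Mathlib

/-! Write `w = (p, q, v)` and let `μ` be the mean of `v`. The blocks of `X̃w` are `p`, `q`,
`ξ⁻¹(v - μ)`, `ξ⁻¹(p + q - v)` and a last one that only adds to `‖X̃w‖²`, so `‖X̃w‖² ≤ (1+ε²)n`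
makes `Σ(vᵢ - μ)² + Σ(pᵢ + qᵢ - vᵢ)²` at most `(7/6)ξ²n`, and together with
`‖w‖² = 2n` it gives `μ² > 1/2`. An index of `J` contributes `μ²` to `Σ(pᵢ + qᵢ - μ)²`, and a
zero of `v` contributes `μ²` to `Σ(vᵢ - μ)²`, so both kinds of indices are `O(ξ²n)`. Counting
nonzeros, `|I| = ‖p‖₀ + ‖q‖₀ + |J| - n` and `‖v‖₀ = n - #{v = 0}`, so the sparsity bound
`‖w‖₀ ≤ 2(1+ξ²)n` yields `|I| ≤ 2ξ²n + |J| + #{v = 0}`. -/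

/-- The matrix `X̃` of equation (7), with blocks
`[I,0,0; 0,I,0; 0,0,ξ⁻¹P; ξ⁻¹I,ξ⁻¹I,-ξ⁻¹I; εΦ,0,-εI']`, where `P = I - (1/n)𝟙𝟙ᵀ` and
`I'` is the `n×n` identity truncated to `m` rows. Rows are indexed by
`Fin n ⊕ Fin n ⊕ Fin n ⊕ Fin n ⊕ Fin m` and columns by `Fin n ⊕ Fin n ⊕ Fin n`. -/
noncomputable def Xt (n m : ℕ) (Φ : Matrix (Fin m) (Fin n) ℝ) (ε ξ : ℝ) :
    Matrix (Fin n ⊕ Fin n ⊕ Fin n ⊕ Fin n ⊕ Fin m) (Fin n ⊕ Fin n ⊕ Fin n) ℝ :=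
  Matrix.of fun i j =>
    match i, j with
    | .inl i, .inl j => if i = j then 1 else 0
    | .inl _, _ => 0
    | .inr (.inl i), .inr (.inl j) => if i = j then 1 else 0
    | .inr (.inl _), _ => 0
    | .inr (.inr (.inl i)), .inr (.inr j) => ξ⁻¹ * ((if i = j then 1 else 0) - 1 / n)
    | .inr (.inr (.inl _)), _ => 0
    | .inr (.inr (.inr (.inl i))), .inl j => ξ⁻¹ * (if i = j then 1 else 0)
    | .inr (.inr (.inr (.inl i))), .inr (.inl j) => ξ⁻¹ * (if i = j then 1 else 0)
    | .inr (.inr (.inr (.inl i))), .inr (.inr j) => -(ξ⁻¹) * (if i = j then 1 else 0)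
    | .inr (.inr (.inr (.inr i))), .inl j => ε * Φ i j
    | .inr (.inr (.inr (.inr _))), .inr (.inl _) => 0
    | .inr (.inr (.inr (.inr i))), .inr (.inr j) =>
        -ε * (if (i : ℕ) = (j : ℕ) then 1 else 0)

open Finset Matrix

section Counting

variable {ι M : Type*} [Finite ι] [Zero M]

theorem ncard_support_sum_type {α β : Type*} [Finite α] [Finite β] (w : α ⊕ β → M) :
    (Function.support w).ncard =
      (Function.support (w ∘ Sum.inl)).ncard + (Function.support (w ∘ Sum.inr)).ncard := by
  have hsupp : Function.support w =
      Sum.inl '' Function.support (w ∘ Sum.inl) ∪ Sum.inr '' Function.support (w ∘ Sum.inr) := by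
    ext (a | b) <;> simp
  rw [hsupp, Set.ncard_union_eq, Set.ncard_image_of_injective _ Sum.inl_injective,
    Set.ncard_image_of_injective _ Sum.inr_injective]
  exact Set.disjoint_left.2 (by rintro _ ⟨a, -, rfl⟩ ⟨b, -, hb⟩; exact Sum.inr_ne_inl hb)

theorem ncard_support_add_ncard_setOf_eq_zero (v : ι → M) :
    (Function.support v).ncard + {i | v i = 0}.ncard = Nat.card ι := by
  rw [← Set.ncard_add_ncard_compl (Function.support v), Function.compl_support]

theorem ncard_support_add_ncard_support_add_ncard_setOf_and_eq_zero (p q : ι → M) :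
    (Function.support p).ncard + (Function.support q).ncard + {i | p i = 0 ∧ q i = 0}.ncard =
      {i | p i ≠ 0 ∧ q i ≠ 0}.ncard + Nat.card ι := by
  have hcompl : {i | p i = 0 ∧ q i = 0} = (Function.support p ∪ Function.support q)ᶜ := by
    ext i; simp
  rw [← Set.ncard_union_add_ncard_inter, hcompl, add_right_comm,
    Set.ncard_add_ncard_compl, add_comm]
  rfl

end Counting

section Deviation

variable {ι : Type*} [Fintype ι]

theorem sum_sq_add_le (a b : ι → ℝ) :
    ∑ i, (a i + b i) ^ 2 ≤ 2 * (∑ i, a i ^ 2 + ∑ i, b i ^ 2) := by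
  rw [← sum_add_distrib, mul_sum]
  exact sum_le_sum fun i _ => add_sq_le

theorem sum_sq_sub_mean (v : ι → ℝ) :
    ∑ i, (v i - (∑ j, v j) / Fintype.card ι) ^ 2 =
      ∑ i, v i ^ 2 - Fintype.card ι * ((∑ j, v j) / Fintype.card ι) ^ 2 := by
  rcases isEmpty_or_nonempty ι with hι | hι
  · simp
  have hcard : (Fintype.card ι : ℝ) ≠ 0 := by positivity
  simp only [sub_sq, sum_add_distrib, sum_sub_distrib, sum_const, card_univ, nsmul_eq_mul,
    ← sum_mul, ← mul_sum]
  field_simp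
  ring

theorem lt_sq_mean_of_add_sum_sq_sub_mean_lt {c : ℝ} (v : ι → ℝ) (hι : 0 < Fintype.card ι)
    (h : c * Fintype.card ι + ∑ i, (v i - (∑ j, v j) / Fintype.card ι) ^ 2 < ∑ i, v i ^ 2) :
    c < ((∑ j, v j) / Fintype.card ι) ^ 2 := by
  rw [sum_sq_sub_mean] at h
  have hcard : (0 : ℝ) < Fintype.card ι := by exact_mod_cast hι
  nlinarith

theorem ncard_setOf_eq_zero_mul_sq_le (f : ι → ℝ) (c : ℝ) :
    ({i | f i = 0}.ncard : ℝ) * c ^ 2 ≤ ∑ i, (f i - c) ^ 2 := by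
  classical
  rw [Set.ncard_eq_toFinset_card', Set.toFinset_ofPred, ← nsmul_eq_mul, ← sum_const]
  calc ∑ _i ∈ univ.filter (f · = 0), c ^ 2 = ∑ i ∈ univ.filter (f · = 0), (f i - c) ^ 2 :=
        sum_congr rfl fun i hi => by simp [(mem_filter.1 hi).2]
    _ ≤ ∑ i, (f i - c) ^ 2 :=
        sum_le_sum_of_subset_of_nonneg (subset_univ _) fun _ _ _ => sq_nonneg _

theorem ncard_setOf_and_eq_zero_mul_sq_le (p q v : ι → ℝ) (c : ℝ) :
    ({i | p i = 0 ∧ q i = 0}.ncard : ℝ) * c ^ 2 ≤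
      2 * (∑ i, (p i + q i - v i) ^ 2 + ∑ i, (v i - c) ^ 2) := by
  have hsub : {i | p i = 0 ∧ q i = 0} ⊆ {i | (p + q) i = 0} := fun i hi => by
    simp [hi.1, hi.2]
  calc ({i | p i = 0 ∧ q i = 0}.ncard : ℝ) * c ^ 2
      ≤ ({i | (p + q) i = 0}.ncard : ℝ) * c ^ 2 := by
        gcongr ?_ * _; exact_mod_cast Set.ncard_le_ncard hsub
    _ ≤ ∑ i, ((p i + q i - v i) + (v i - c)) ^ 2 := by
        simpa using ncard_setOf_eq_zero_mul_sq_le (p + q) c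
    _ ≤ _ := sum_sq_add_le _ _

/-- Every index where `p` and `q` both vanish, or where `v` vanishes, costs at least
`c² > 1/2` in one of the two sums of squares. -/
theorem ncard_and_ne_zero_add_ncard_and_eq_zero_le (p q v : ι → ℝ) {c : ℝ} (hc : 1 / 2 < c ^ 2) :
    ({i | p i ≠ 0 ∧ q i ≠ 0}.ncard : ℝ) + {i | p i = 0 ∧ q i = 0}.ncard + 2 * Fintype.card ι ≤
      (Function.support p).ncard + (Function.support q).ncard + (Function.support v).ncard +
        10 * (∑ i, (p i + q i - v i) ^ 2 + ∑ i, (v i - c) ^ 2) := by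
  have hpq : ((Function.support p).ncard : ℝ) + (Function.support q).ncard +
      {i | p i = 0 ∧ q i = 0}.ncard = {i | p i ≠ 0 ∧ q i ≠ 0}.ncard + Fintype.card ι := by
    exact_mod_cast Nat.card_eq_fintype_card (α := ι) ▸
      ncard_support_add_ncard_support_add_ncard_setOf_and_eq_zero p q
  have hv : ((Function.support v).ncard : ℝ) + {i | v i = 0}.ncard = Fintype.card ι := by
    exact_mod_cast Nat.card_eq_fintype_card (α := ι) ▸ ncard_support_add_ncard_setOf_eq_zero v
  have hJ := ncard_setOf_and_eq_zero_mul_sq_le p q v c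
  have hZ := ncard_setOf_eq_zero_mul_sq_le v c
  have hJ' : ({i | p i = 0 ∧ q i = 0}.ncard : ℝ) * (1 / 2) ≤
      {i | p i = 0 ∧ q i = 0}.ncard * c ^ 2 := by gcongr
  have hZ' : ({i | v i = 0}.ncard : ℝ) * (1 / 2) ≤ {i | v i = 0}.ncard * c ^ 2 := by gcongr
  have hS : 0 ≤ ∑ i, (p i + q i - v i) ^ 2 := by positivity
  linarith

end Deviation

section NormBounds

variable {ι : Type*} [Fintype ι] {ε ξ : ℝ} {p q v : ι → ℝ}

theorem sum_sq_sub_mean_add_le (hξ : 0 < ξ) (hε : ε ^ 2 < 1 / 6)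
    (hX : ∑ i, p i ^ 2 + ∑ i, q i ^ 2 + ξ⁻¹ ^ 2 * (∑ i, (v i - (∑ j, v j) / Fintype.card ι) ^ 2 +
      ∑ i, (p i + q i - v i) ^ 2) ≤ (1 + ε ^ 2) * Fintype.card ι) :
    ∑ i, (v i - (∑ j, v j) / Fintype.card ι) ^ 2 + ∑ i, (p i + q i - v i) ^ 2 ≤
      7 / 6 * ξ ^ 2 * Fintype.card ι := by
  set S := ∑ i, (v i - (∑ j, v j) / Fintype.card ι) ^ 2 + ∑ i, (p i + q i - v i) ^ 2
  have hpq : 0 ≤ ∑ i, p i ^ 2 + ∑ i, q i ^ 2 := by positivity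
  calc S = ξ ^ 2 * (ξ⁻¹ ^ 2 * S) := by field_simp
    _ ≤ ξ ^ 2 * ((1 + ε ^ 2) * Fintype.card ι) :=
      mul_le_mul_of_nonneg_left (by linarith) (by positivity)
    _ ≤ ξ ^ 2 * (7 / 6 * Fintype.card ι) := by gcongr; linarith
    _ = 7 / 6 * ξ ^ 2 * Fintype.card ι := by ring

theorem half_lt_sq_mean (hι : 0 < Fintype.card ι) (hξ : 0 < ξ) (hξε : ξ ≤ ε)
    (hε : ε ^ 2 < 1 / 6)
    (hw : ∑ i, p i ^ 2 + (∑ i, q i ^ 2 + ∑ i, v i ^ 2) = 2 * Fintype.card ι)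
    (hX : ∑ i, p i ^ 2 + ∑ i, q i ^ 2 + ξ⁻¹ ^ 2 * (∑ i, (v i - (∑ j, v j) / Fintype.card ι) ^ 2 +
      ∑ i, (p i + q i - v i) ^ 2) ≤ (1 + ε ^ 2) * Fintype.card ι) :
    1 / 2 < ((∑ j, v j) / Fintype.card ι) ^ 2 := by
  refine lt_sq_mean_of_add_sum_sq_sub_mean_lt v hι ?_
  have hS := sum_sq_sub_mean_add_le hξ hε hX
  have hS₂ : 0 ≤ ∑ i, (p i + q i - v i) ^ 2 := by positivity
  have hξS : 0 ≤ ξ⁻¹ ^ 2 * (∑ i, (v i - (∑ j, v j) / Fintype.card ι) ^ 2 +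
      ∑ i, (p i + q i - v i) ^ 2) := by positivity
  have hξ2 : ξ ^ 2 ≤ ε ^ 2 := by gcongr
  have hcard : (0 : ℝ) < Fintype.card ι := by exact_mod_cast hι
  nlinarith

end NormBounds

section Xt

variable {n m : ℕ} (Φ : Matrix (Fin m) (Fin n) ℝ) (ε ξ : ℝ) (p q v : Fin n → ℝ)

theorem Xt_mulVec_inl (i : Fin n) :
    (Xt n m Φ ε ξ *ᵥ Sum.elim p (Sum.elim q v)) (Sum.inl i) = p i := by
  simp [Xt, mulVec, dotProduct, Fintype.sum_sum_type]

theorem Xt_mulVec_inr_inl (i : Fin n) :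
    (Xt n m Φ ε ξ *ᵥ Sum.elim p (Sum.elim q v)) (Sum.inr (Sum.inl i)) = q i := by
  simp [Xt, mulVec, dotProduct, Fintype.sum_sum_type]

theorem Xt_mulVec_inr_inr_inl (i : Fin n) :
    (Xt n m Φ ε ξ *ᵥ Sum.elim p (Sum.elim q v)) (Sum.inr (Sum.inr (Sum.inl i))) =
      ξ⁻¹ * (v i - (∑ j, v j) / n) := by
  simp [Xt, mulVec, dotProduct, Fintype.sum_sum_type, mul_sub, sub_mul, ite_mul,
    sum_sub_distrib, ← mul_sum, div_eq_mul_inv]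
  ring

theorem Xt_mulVec_inr_inr_inr_inl (i : Fin n) :
    (Xt n m Φ ε ξ *ᵥ Sum.elim p (Sum.elim q v)) (Sum.inr (Sum.inr (Sum.inr (Sum.inl i)))) =
      ξ⁻¹ * (p i + q i - v i) := by
  simp [Xt, mulVec, dotProduct, Fintype.sum_sum_type]
  ring

theorem sum_sq_add_sum_sq_add_deviation_le_sum_sq_Xt_mulVec :
    ∑ i, p i ^ 2 + ∑ i, q i ^ 2 +
        ξ⁻¹ ^ 2 * (∑ i, (v i - (∑ j, v j) / n) ^ 2 + ∑ i, (p i + q i - v i) ^ 2) ≤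
      ∑ i, (Xt n m Φ ε ξ *ᵥ Sum.elim p (Sum.elim q v)) i ^ 2 := by
  simp only [Fintype.sum_sum_type, Xt_mulVec_inl, Xt_mulVec_inr_inl, Xt_mulVec_inr_inr_inl,
    Xt_mulVec_inr_inr_inr_inl, mul_pow, ← mul_sum, mul_add]
  have : 0 ≤ ∑ i : Fin m,
      (Xt n m Φ ε ξ *ᵥ Sum.elim p (Sum.elim q v)) (Sum.inr (Sum.inr (Sum.inr (Sum.inr i)))) ^ 2 :=
    sum_nonneg fun _ _ => sq_nonneg _
  linarith

end Xt

theorem stmt_14_general {n m : ℕ} (hn : 0 < n)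
    (Φ : Matrix (Fin m) (Fin n) ℝ)
    (ε ξ : ℝ) (hξ : 0 < ξ) (hξε : ξ ≤ ε) (hε : ε ^ 2 < 1 / 6)
    (w : (Fin n ⊕ Fin n ⊕ Fin n) → ℝ)
    (hw : ∑ j, w j ^ 2 = 2 * n)
    (hw0 : ((Function.support w).ncard : ℝ) ≤ 2 * (1 + ξ ^ 2) * n)
    (hXw : ∑ i, ((Xt n m Φ ε ξ).mulVec w i) ^ 2 ≤ (1 + ε ^ 2) * n) :
    (({i : Fin n | w (Sum.inl i) ≠ 0 ∧ w (Sum.inr (Sum.inl i)) ≠ 0}.ncard : ℝ) +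
        ({j : Fin n | w (Sum.inl j) = 0 ∧ w (Sum.inr (Sum.inl j)) = 0}.ncard : ℝ))
      < 38 * ξ ^ 2 * n := by
  obtain ⟨p, q, v, rfl⟩ : ∃ p q v : Fin n → ℝ, w = Sum.elim p (Sum.elim q v) :=
    ⟨_, _, _, by rw [Sum.elim_comp_inl_inr, Sum.elim_comp_inl_inr]⟩
  have hX := (sum_sq_add_sum_sq_add_deviation_le_sum_sq_Xt_mulVec Φ ε ξ p q v).trans hXw
  simp only [Fintype.sum_sum_type, Sum.elim_inl, Sum.elim_inr, ncard_support_sum_type,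
    Sum.elim_comp_inl, Sum.elim_comp_inr] at hw hw0 ⊢
  have hS := sum_sq_sub_mean_add_le (ι := Fin n) hξ hε (by simpa using hX)
  have hμ := half_lt_sq_mean (ι := Fin n) (by simpa) hξ hξε hε (by simpa using hw)
    (by simpa using hX)
  have hcount := ncard_and_ne_zero_add_ncard_and_eq_zero_le p q v hμ
  simp only [Fintype.card_fin] at hS hcount
  have hξn : 0 < ξ ^ 2 * n := by positivity
  push_cast at hw0
  linarith

/-- Lemma 2 of the paper: if `ε² < 1/6`, `‖w‖² = 2n`, `‖w‖₀ ≤ 2(1+ξ²)n` and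
`‖X̃w‖² ≤ (1+ε²)n`, then, with `I = {i : wᵢ⁺ ≠ 0 ∧ wᵢ⁻ ≠ 0}` and
`J = {j : w_j⁺ = 0 ∧ w_j⁻ = 0}`, one has `|I| + |J| < 38ξ²n`. -/
theorem stmt_14 {n m : ℕ} (hn : 0 < n)
    (Φ : Matrix (Fin m) (Fin n) ℝ) (hΦ : ∀ i j, Φ i j = 0 ∨ Φ i j = 1)
    (ε ξ : ℝ) (hξ : 0 < ξ) (hξε : ξ ≤ ε) (hε : ε ^ 2 < 1 / 6)
    (w : (Fin n ⊕ Fin n ⊕ Fin n) → ℝ)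
    (hw : ∑ j, w j ^ 2 = 2 * n)
    (hw0 : ((Function.support w).ncard : ℝ) ≤ 2 * (1 + ξ ^ 2) * n)
    (hXw : ∑ i, ((Xt n m Φ ε ξ).mulVec w i) ^ 2 ≤ (1 + ε ^ 2) * n) :
    (({i : Fin n | w (Sum.inl i) ≠ 0 ∧ w (Sum.inr (Sum.inl i)) ≠ 0}.ncard : ℝ) +
        ({j : Fin n | w (Sum.inl j) = 0 ∧ w (Sum.inr (Sum.inl j)) = 0}.ncard : ℝ))
      < 38 * ξ ^ 2 * n :=
  stmt_14_general hn Φ ε ξ hξ hξε hε w hw hw0 hXw
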